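/- The Beck–Chevalley condition holds for the Kleene realizability doctrine over Rec: let f : A → C and g : B → C be morphisms of Rec, let D := {⟨a,b⟩ : a ∈ A, b ∈ B, f(a) = g(b)} with the projection morphisms q₁ : D → A and q₂ : D → B of Rec (so that D, q₁, q₂ form a pullback of f and g in Rec). Then for every realized predicate P on A, both g*(∃_f P) ⊑_B ∃_{q₂}(q₁* P) and ∃_{q₂}(q₁* P) ⊑_B g*(∃_f P) hold. -/

import Mathlib

/-!
The pullback of `f` and `g` in `Rec` is the set of codes `⟨a, b⟩` with `f a = g b`, with
the two unpairings as projections; a cone factors through it by pairing its two legs.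
Both Beck–Chevalley inequalities are then realized by primitive recursive reshufflings of
pairs: a witness `⟨a, n⟩` of `(∃_f P)(g b)` becomes the witness `⟨⟨a, b⟩, n⟩` of
`∃_{q₂}(q₁* P)` at `b`, and conversely `⟨⟨a, b⟩, n⟩` is sent to `⟨a, n⟩`.
-/

open CategoryTheory

namespace RecPaper

/-- Kleene application `{e}(n)`: apply the partial recursive function with Gödel code `e`
to the input `n`. -/
def kap (e n : ℕ) : Part ℕ :=
  Nat.Partrec.Code.eval (Denumerable.ofNat Nat.Partrec.Code e) n

/-- The type of objects of the category `Rec`: subsets of `ℕ`. -/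
def RecCat : Type := Set ℕ

/-- The underlying subset of `ℕ` of an object of `Rec`. -/
def RecCat.carrier (A : RecCat) : Set ℕ := A

/-- View a subset of `ℕ` as an object of `Rec`. -/
def RecCat.ofSet (A : Set ℕ) : RecCat := A

instance : CoeSort RecCat Type := ⟨fun A => {n : ℕ // n ∈ A.carrier}⟩

/-- A function between subsets of `ℕ` is *tracked* if there is a partial recursive
function, defined on the whole domain, whose restriction to the domain is the given
function. -/
def Tracked {A B : RecCat} (f : A → B) : Prop :=
  ∃ g : ℕ →. ℕ, Nat.Partrec g ∧ ∀ a : A, g a.val = Part.some (f a).val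

/-- The category `Rec` of subsets of `ℕ` and restrictions of partial recursive functions. -/
instance : Category RecCat where
  Hom A B := {f : A → B // Tracked f}
  id A := ⟨fun a => a, (fun n => n : ℕ → ℕ), Nat.Partrec.of_primrec Nat.Primrec.id,
    fun _ => rfl⟩
  comp {A B C} f g := ⟨fun a => g.1 (f.1 a), by
    obtain ⟨u, pu, hu⟩ := f.2
    obtain ⟨v, pv, hv⟩ := g.2
    refine ⟨fun n => u n >>= v, pv.comp pu, fun a => ?_⟩
    show u a.val >>= v = _
    rw [hu a]
    exact (Part.bind_some _ _).trans (hv (f.1 a))⟩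
  id_comp _ := rfl
  comp_id _ := rfl
  assoc _ _ _ := rfl

/-- The underlying function of a morphism of `Rec`. -/
def hfun {A B : RecCat} (f : A ⟶ B) : A → B := f.1

/-- The value of a morphism of `Rec` on an element, as a natural number. -/
def happ {A B : RecCat} (f : A ⟶ B) (a : A) : ℕ := (hfun f a).val


/-- The realizability order `P ⊑_A Q` between realized predicates on `A`. -/
def rle (A : Set ℕ) (P Q : ℕ → Set ℕ) : Prop :=
  ∃ e : ℕ, ∀ a ∈ A, ∀ n ∈ P a, ∃ v ∈ Q a, kap e (Nat.pair a n) = Part.some v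

/-- Reindexing of a realized predicate along a morphism of `Rec`. -/
def fstar {A B : RecCat} (f : A ⟶ B) (Q : ℕ → Set ℕ) : ℕ → Set ℕ :=
  fun a => {n | ∃ h : a ∈ A.carrier, n ∈ Q (happ f ⟨a, h⟩)}

/-- The left adjoint `∃_f P`. -/
def rexists {A B : RecCat} (f : A ⟶ B) (P : ℕ → Set ℕ) : ℕ → Set ℕ :=
  fun b => {m | ∃ a : A, happ f a = b ∧ ∃ n ∈ P a.val, m = Nat.pair a.val n}

/-- The pullback set `D = {⟨a,b⟩ : a ∈ A, b ∈ B, f(a) = g(b)}`. -/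
def pbSet {A B C : RecCat} (f : A ⟶ C) (g : B ⟶ C) : Set ℕ :=
  {n | ∃ (a : A) (b : B), n = Nat.pair a.val b.val ∧ happ f a = happ g b}

theorem exists_kap_eq_of_primrec {r : ℕ → ℕ} (hr : Nat.Primrec r) :
    ∃ e : ℕ, ∀ n, kap e n = Part.some (r n) := by
  obtain ⟨c, hc⟩ := Nat.Partrec.Code.exists_code.1 (Nat.Partrec.of_primrec hr)
  exact ⟨Encodable.encode c, fun n => by simp [kap, hc]⟩

theorem rle_of_primrec {A : Set ℕ} {P Q : ℕ → Set ℕ} {r : ℕ → ℕ} (hr : Nat.Primrec r)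
    (hrQ : ∀ a ∈ A, ∀ n ∈ P a, r (Nat.pair a n) ∈ Q a) : rle A P Q := by
  obtain ⟨e, he⟩ := exists_kap_eq_of_primrec hr
  exact ⟨e, fun a ha n hn => ⟨_, hrQ a ha n hn, he _⟩⟩

namespace RecCat

theorem hom_ext {A B : RecCat} {f g : A ⟶ B} (h : ∀ a, happ f a = happ g a) : f = g :=
  Subtype.ext (funext fun a => Subtype.ext (h a))

def homOfPrimrec {A B : RecCat} (r : ℕ → ℕ) (hr : Nat.Primrec r)
    (hrB : ∀ a : A, r a.val ∈ B.carrier) : A ⟶ B :=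
  ⟨fun a => ⟨r a.val, hrB a⟩, (r : ℕ →. ℕ), Nat.Partrec.of_primrec hr, fun _ => rfl⟩

section Pullback

variable {A B C : RecCat} (f : A ⟶ C) (g : B ⟶ C)

theorem exists_of_mem_pbSet {x : ℕ} (hx : x ∈ pbSet f g) :
    ∃ (ha : x.unpair.1 ∈ A.carrier) (hb : x.unpair.2 ∈ B.carrier),
      happ f ⟨_, ha⟩ = happ g ⟨_, hb⟩ := by
  obtain ⟨a, b, rfl, hab⟩ := hx
  simpa only [Nat.unpair_pair] using ⟨a.2, b.2, hab⟩

theorem pair_mem_pbSet (a : A) (b : B) (hab : happ f a = happ g b) :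
    Nat.pair a.val b.val ∈ pbSet f g :=
  ⟨a, b, rfl, hab⟩

abbrev pb : RecCat := ofSet (pbSet f g)

def pbFst : pb f g ⟶ A :=
  homOfPrimrec (fun x => x.unpair.1) Nat.Primrec.left fun x => (exists_of_mem_pbSet f g x.2).1

def pbSnd : pb f g ⟶ B :=
  homOfPrimrec (fun x => x.unpair.2) Nat.Primrec.right
    fun x => (exists_of_mem_pbSet f g x.2).2.1

@[simp]
theorem happ_pbFst (x : pb f g) : happ (pbFst f g) x = x.val.unpair.1 := rfl

@[simp]
theorem happ_pbSnd (x : pb f g) : happ (pbSnd f g) x = x.val.unpair.2 := rfl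

theorem pbFst_comp : pbFst f g ≫ f = pbSnd f g ≫ g :=
  hom_ext fun x => (exists_of_mem_pbSet f g x.2).2.2

variable {f g}

def pbLift {W : RecCat} (h₁ : W ⟶ A) (h₂ : W ⟶ B) (w : h₁ ≫ f = h₂ ≫ g) : W ⟶ pb f g :=
  ⟨fun x => ⟨Nat.pair (happ h₁ x) (happ h₂ x),
      pair_mem_pbSet f g _ _ (congrArg (happ · x) w)⟩, by
    obtain ⟨u, pu, hu⟩ := h₁.2
    obtain ⟨v, pv, hv⟩ := h₂.2
    refine ⟨fun n => Nat.pair <$> u n <*> v n, pu.pair pv, fun x => ?_⟩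
    simp [hu x, hv x, Seq.seq, happ, hfun]⟩

@[simp]
theorem happ_pbLift {W : RecCat} (h₁ : W ⟶ A) (h₂ : W ⟶ B) (w : h₁ ≫ f = h₂ ≫ g) (x : W) :
    happ (pbLift h₁ h₂ w) x = Nat.pair (happ h₁ x) (happ h₂ x) :=
  rfl

variable (f g)

theorem isPullback_pb : IsPullback (pbFst f g) (pbSnd f g) f g := by
  refine IsPullback.of_isLimit' ⟨pbFst_comp f g⟩
    (Limits.PullbackCone.IsLimit.mk _ (fun s => pbLift s.fst s.snd s.condition)
      (fun s => hom_ext fun x => ?_) (fun s => hom_ext fun x => ?_)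
      (fun s m h₁ h₂ => hom_ext fun x => ?_))
  · exact congrArg Prod.fst (Nat.unpair_pair _ _)
  · exact congrArg Prod.snd (Nat.unpair_pair _ _)
  · rw [happ_pbLift, ← h₁, ← h₂]
    exact (Nat.pair_unpair _).symm

theorem rle_fstar_rexists_rexists_fstar (P : ℕ → Set ℕ) :
    rle B.carrier (fstar g (rexists f P)) (rexists (pbSnd f g) (fstar (pbFst f g) P)) := by
  refine rle_of_primrec (r := fun x => Nat.pair (Nat.pair x.unpair.2.unpair.1 x.unpair.1)
    x.unpair.2.unpair.2)
    ((Nat.Primrec.left.comp Nat.Primrec.right).pair Nat.Primrec.left |>.pair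
      (Nat.Primrec.right.comp Nat.Primrec.right)) ?_
  rintro b - _ ⟨hb, a, hab, n, hn, rfl⟩
  have hd := pair_mem_pbSet f g a ⟨b, hb⟩ hab
  simp only [Nat.unpair_pair]
  exact ⟨⟨_, hd⟩, by simp, n, ⟨hd, by simpa using hn⟩, rfl⟩

theorem rle_rexists_fstar_fstar_rexists (P : ℕ → Set ℕ) :
    rle B.carrier (rexists (pbSnd f g) (fstar (pbFst f g) P)) (fstar g (rexists f P)) := by
  refine rle_of_primrec (r := fun x => Nat.pair x.unpair.2.unpair.1.unpair.1 x.unpair.2.unpair.2)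
    ((Nat.Primrec.left.comp (Nat.Primrec.left.comp Nat.Primrec.right)).pair
      (Nat.Primrec.right.comp Nat.Primrec.right)) ?_
  rintro b hb _ ⟨⟨_, a, b', rfl, hab⟩, hb', n, ⟨_, hn⟩, rfl⟩
  obtain rfl : b'.val = b := by simpa using hb'
  simp only [Nat.unpair_pair]
  exact ⟨hb, a, hab, n, by simpa using hn, rfl⟩

end Pullback

end RecCat

open RecCat in
/-- The Beck–Chevalley condition for the Kleene realizability doctrine over `Rec`:
for the canonical pullback `D` of `f` and `g` with projections `q₁`, `q₂`, both
`g*(∃_f P) ⊑_B ∃_{q₂}(q₁* P)` and `∃_{q₂}(q₁* P) ⊑_B g*(∃_f P)`. -/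
theorem rec_beck_chevalley :
    ∀ (A B C : RecCat) (f : A ⟶ C) (g : B ⟶ C),
      ∃ (q₁ : RecCat.ofSet (pbSet f g) ⟶ A) (q₂ : RecCat.ofSet (pbSet f g) ⟶ B),
        (∀ x, happ q₁ x = (Nat.unpair x.val).1) ∧
        (∀ x, happ q₂ x = (Nat.unpair x.val).2) ∧
        IsPullback q₁ q₂ f g ∧
        ∀ P : ℕ → Set ℕ,
          rle B.carrier (fstar g (rexists f P)) (rexists q₂ (fstar q₁ P)) ∧
          rle B.carrier (rexists q₂ (fstar q₁ P)) (fstar g (rexists f P)) :=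
  fun _ _ _ f g => ⟨pbFst f g, pbSnd f g, happ_pbFst f g, happ_pbSnd f g, isPullback_pb f g,
    fun P => ⟨rle_fstar_rexists_rexists_fstar f g P, rle_rexists_fstar_fstar_rexists f g P⟩⟩

end RecPaper
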